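/- arXiv:2403.12303 — 3 statements merged into one kernel-verified Lean document; each statement's English description precedes it below -/
import Mathlib

section
/- Let Γ be a finite family of pseudo-lines (continuous functions ℝ → ℝ, pairwise intersecting at most once) partitioned into subsets Γ₁, …, Γᵣ. Say a point q = (x, y) crosses Γᵢ if some f ∈ Γᵢ has f(x) > y and some g ∈ Γᵢ has g(x) < y. Let Δ be a region of the plane with four designated 'vertices' v_TL, v_BL, v_TR, v_BR such that Δ is bounded above by a sub-arc of one pseudo-line from v_TL to v_TR and below by a sub-arc of another from v_BL to v_BR (both not in Γ, but pairwise intersecting each member of Γ at most once). Suppose q ∈ Δ and none of the four vertices crosses Γᵢ, and suppose not all members of Γᵢ intersect the closure of Δ. Then q does not cross Γᵢ. -/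
/-!
A member `f` of `Γᵢ` missing `Δ` lies, by connectedness of `[a, b]`, entirely above `u` or
entirely below `ℓ`; say above. If `q` crossed `Γᵢ`, some `g ∈ Γᵢ` would pass below `q`, hence
below `u` at `x₀`. Since `f` is above the top vertices and these do not cross `Γᵢ`, `g` is not
below `u` at `a` nor at `b`, so `g` meets `u` on both sides of `x₀`: twice.
-/

def PtCrosses (S : Set (ℝ → ℝ)) (x y : ℝ) : Prop :=
  (∃ f ∈ S, f x > y) ∧ (∃ g ∈ S, g x < y)

open Set

lemma le_of_not_ptCrosses {S : Set (ℝ → ℝ)} {x y : ℝ} (h : ¬ PtCrosses S x y)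
    (hS : ∃ f ∈ S, y < f x) : ∀ g ∈ S, y ≤ g x :=
  fun g hg => not_lt.mp fun hgy => h ⟨hS, g, hg, hgy⟩

lemma ge_of_not_ptCrosses {S : Set (ℝ → ℝ)} {x y : ℝ} (h : ¬ PtCrosses S x y)
    (hS : ∃ f ∈ S, f x < y) : ∀ g ∈ S, g x ≤ y :=
  fun g hg => not_lt.mp fun hgy => h ⟨⟨g, hg, hgy⟩, hS⟩

lemma IsPreconnected.forall_lt_or_forall_lt_of_notMem_strip {s : Set ℝ} (hs : IsPreconnected s)
    {f u ℓ : ℝ → ℝ} (hf : Continuous f) (hu : Continuous u) (hl : Continuous ℓ)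
    (hul : ∀ x ∈ s, ℓ x ≤ u x) (hfs : ∀ x ∈ s, ¬ (ℓ x ≤ f x ∧ f x ≤ u x)) :
    (∀ x ∈ s, u x < f x) ∨ (∀ x ∈ s, f x < ℓ x) := by
  have hcover : s ⊆ {x | u x < f x ∧ ℓ x < f x} ∪ {x | f x < ℓ x ∧ f x < u x} := by
    intro x hx
    by_cases hlf : ℓ x ≤ f x
    · have huf : u x < f x := lt_of_not_ge fun hfu => hfs x hx ⟨hlf, hfu⟩
      exact Or.inl ⟨huf, (hul x hx).trans_lt huf⟩
    · have hfl : f x < ℓ x := lt_of_not_ge hlf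
      exact Or.inr ⟨hfl, hfl.trans_le (hul x hx)⟩
  have hdisj : Disjoint {x | u x < f x ∧ ℓ x < f x} {x | f x < ℓ x ∧ f x < u x} :=
    disjoint_left.mpr fun x h₁ h₂ => (h₁.1.trans h₂.2).false
  rcases hs.subset_or_subset ((isOpen_lt hu hf).inter (isOpen_lt hl hf))
    ((isOpen_lt hf hl).inter (isOpen_lt hf hu)) hdisj hcover with h | h
  · exact Or.inl fun x hx => (h hx).1
  · exact Or.inr fun x hx => (h hx).1

lemma not_subsingleton_setOf_eq_of_le_of_lt_of_le {g u : ℝ → ℝ} {a b x₀ : ℝ}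
    (hg : ContinuousOn g (Icc a b)) (hu : ContinuousOn u (Icc a b))
    (hx : x₀ ∈ Icc a b) (ha : u a ≤ g a) (hx₀ : g x₀ < u x₀) (hb : u b ≤ g b) :
    ¬ {x | g x = u x}.Subsingleton := by
  have hleft : Icc a x₀ ⊆ Icc a b := Icc_subset_Icc_right hx.2
  have hright : Icc x₀ b ⊆ Icc a b := Icc_subset_Icc_left hx.1
  obtain ⟨p, hp, hgp⟩ := isPreconnected_Icc.intermediate_value₂ (left_mem_Icc.mpr hx.1)
    (right_mem_Icc.mpr hx.1) (hu.mono hleft) (hg.mono hleft) ha hx₀.le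
  obtain ⟨q, hq, hgq⟩ := isPreconnected_Icc.intermediate_value₂ (left_mem_Icc.mpr hx.2)
    (right_mem_Icc.mpr hx.2) (hg.mono hright) (hu.mono hright) hx₀.le hb
  have hpx : p ≠ x₀ := by rintro rfl; exact hx₀.ne' hgp
  have hqx : q ≠ x₀ := by rintro rfl; exact hx₀.ne hgq
  intro hsub
  have hpq : p = q := hsub hgp.symm hgq
  linarith [hp.2.lt_of_ne hpx, hq.1.lt_of_ne' hqx]

theorem stmt_3_general (Γi : Set (ℝ → ℝ)) (u ℓ : ℝ → ℝ) (a b : ℝ)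
    (hu : Continuous u) (hl : Continuous ℓ)
    (hul : ∀ x ∈ Set.Icc a b, ℓ x ≤ u x)
    (hcont : ∀ f ∈ Γi, Continuous f)
    (hfu : ∀ f ∈ Γi, {x : ℝ | f x = u x}.Subsingleton)
    (hfl : ∀ f ∈ Γi, {x : ℝ | f x = ℓ x}.Subsingleton)
    (hTL : ¬ PtCrosses Γi a (u a)) (hBL : ¬ PtCrosses Γi a (ℓ a))
    (hTR : ¬ PtCrosses Γi b (u b)) (hBR : ¬ PtCrosses Γi b (ℓ b))
    (hNotAll : ∃ f ∈ Γi, ∀ x ∈ Set.Icc a b, ¬ (ℓ x ≤ f x ∧ f x ≤ u x))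
    (x₀ y₀ : ℝ) (hx : x₀ ∈ Set.Icc a b) (hy : ℓ x₀ ≤ y₀ ∧ y₀ ≤ u x₀) :
    ¬ PtCrosses Γi x₀ y₀ := by
  rintro ⟨⟨g, hg, hgy⟩, ⟨h, hh, hhy⟩⟩
  obtain ⟨f, hf, hfΔ⟩ := hNotAll
  have ha : a ∈ Icc a b := left_mem_Icc.mpr (hx.1.trans hx.2)
  have hb : b ∈ Icc a b := right_mem_Icc.mpr (hx.1.trans hx.2)
  rcases isPreconnected_Icc.forall_lt_or_forall_lt_of_notMem_strip (hcont f hf) hu hl hul hfΔ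
    with habove | hbelow
  · exact not_subsingleton_setOf_eq_of_le_of_lt_of_le (hcont h hh).continuousOn hu.continuousOn
      hx (le_of_not_ptCrosses hTL ⟨f, hf, habove a ha⟩ h hh) (hhy.trans_le hy.2)
      (le_of_not_ptCrosses hTR ⟨f, hf, habove b hb⟩ h hh) (hfu h hh)
  · refine not_subsingleton_setOf_eq_of_le_of_lt_of_le hl.continuousOn (hcont g hg).continuousOn
      hx (ge_of_not_ptCrosses hBL ⟨f, hf, hbelow a ha⟩ g hg) (hy.1.trans_lt hgy)
      (ge_of_not_ptCrosses hBR ⟨f, hf, hbelow b hb⟩ g hg) ?_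
    simpa only [eq_comm] using hfl g hg

/-- Let `Δ` be the pseudo-trapezoid bounded above by the pseudo-line `u`
and below by the pseudo-line `ℓ` over `[a, b]`. If none of the four vertices of `Δ`
crosses the subfamily `Γi`, and not every member of `Γi` intersects `Δ`, then no point
`q = (x₀, y₀)` of `Δ` crosses `Γi`. -/
theorem stmt_3 (Γi : Set (ℝ → ℝ)) (u ℓ : ℝ → ℝ) (a b : ℝ) (hab : a < b)
    (hu : Continuous u) (hl : Continuous ℓ)
    (hul : ∀ x ∈ Set.Icc a b, ℓ x ≤ u x)
    (hcont : ∀ f ∈ Γi, Continuous f)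
    (hfu : ∀ f ∈ Γi, {x : ℝ | f x = u x}.Subsingleton)
    (hfl : ∀ f ∈ Γi, {x : ℝ | f x = ℓ x}.Subsingleton)
    (hpair : ∀ f ∈ Γi, ∀ g ∈ Γi, f ≠ g → {x : ℝ | f x = g x}.Subsingleton)
    (hTL : ¬ PtCrosses Γi a (u a)) (hBL : ¬ PtCrosses Γi a (ℓ a))
    (hTR : ¬ PtCrosses Γi b (u b)) (hBR : ¬ PtCrosses Γi b (ℓ b))
    (hNotAll : ∃ f ∈ Γi, ∀ x ∈ Set.Icc a b, ¬ (ℓ x ≤ f x ∧ f x ≤ u x))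
    (x₀ y₀ : ℝ) (hx : x₀ ∈ Set.Icc a b) (hy : ℓ x₀ ≤ y₀ ∧ y₀ ≤ u x₀) :
    ¬ PtCrosses Γi x₀ y₀ :=
  stmt_3_general Γi u ℓ a b hu hl hul hcont hfu hfl hTL hBL hTR hBR hNotAll x₀ y₀ hx hy
end

section
/- Let F be a family of functions ℝ → ℝ such that any two distinct members of F agree at most once (equal at most one point). Then for any finite set M of t points in the plane, the number of equivalence classes of F under the relation 'f ~ g iff for every (x,y) ∈ M, (f(x) > y ↔ g(x) > y) and (f(x) < y ↔ g(x) < y)' is at most O(t²); concretely, at most C·t² for an absolute constant C (e.g., C can be taken so the bound is 1 + t + t(t-1), i.e., at most t² + 1 classes via a VC-dimension/arrangement argument). -/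
/-!
Encode the class of a pseudo-line `f` by the set of pairs `(p, b)`, `p ∈ M`, such that `p` lies
strictly (`b = true`) or weakly (`b = false`) below the graph of `f`: a subset of a ground set of
size `2t`. If such a pair lies below `f` but not below `g`, then `g < f` at the abscissa of `p`.
So if the family of these subsets shattered three pairs sorted by abscissa, two pseudo-lines would
change order twice, and the intermediate value theorem would give them two common points. Hence
the family has VC-dimension at most `2`, and the Sauer–Shelah lemma bounds its size by
`1 + 2t + (2t choose 2) ≤ 3 (t² + 1)`.
-/

open Finset

theorem Continuous.nontrivial_eq_of_lt_gt_lt {f g : ℝ → ℝ} (hf : Continuous f)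
    (hg : Continuous g) {a b c : ℝ} (hab : a ≤ b) (hbc : b ≤ c) (ha : g a < f a)
    (hb : f b < g b) (hc : g c < f c) : {x | f x = g x}.Nontrivial := by
  have hcont : Continuous (f - g) := hf.sub hg
  obtain ⟨z₁, hz₁, hz₁_eq⟩ := intermediate_value_Icc' hab hcont.continuousOn
    (show (0 : ℝ) ∈ Set.Icc ((f - g) b) ((f - g) a) by
      simp only [Pi.sub_apply]; constructor <;> linarith)
  obtain ⟨z₂, hz₂, hz₂_eq⟩ := intermediate_value_Icc hbc hcont.continuousOn
    (show (0 : ℝ) ∈ Set.Icc ((f - g) b) ((f - g) c) by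
      simp only [Pi.sub_apply]; constructor <;> linarith)
  refine ⟨z₁, sub_eq_zero.1 hz₁_eq, z₂, sub_eq_zero.1 hz₂_eq, fun h => hb.ne ?_⟩
  have hz₁b : z₁ = b := le_antisymm hz₁.2 (h ▸ hz₂.1)
  exact hz₁b ▸ sub_eq_zero.1 hz₁_eq

theorem Finset.exists_three_mem_le_le {α β : Type*} [LinearOrder β] {s : Finset α} (g : α → β)
    (hs : 2 < #s) :
    ∃ u ∈ s, ∃ v ∈ s, ∃ w ∈ s, u ≠ v ∧ v ≠ w ∧ u ≠ w ∧ g u ≤ g v ∧ g v ≤ g w := by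
  classical
  obtain ⟨u, hu, hmin⟩ := s.exists_min_image g (card_pos.1 (by omega))
  obtain ⟨w, hw, hmax⟩ := (s.erase u).exists_max_image g
    (card_pos.1 (by rw [card_erase_of_mem hu]; omega))
  obtain ⟨v, hv⟩ : ((s.erase u).erase w).Nonempty :=
    card_pos.1 (by rw [card_erase_of_mem hw, card_erase_of_mem hu]; omega)
  simp only [mem_erase] at hw hv
  exact ⟨u, hu, v, hv.2.2, w, hw.2, Ne.symm hv.2.1, hv.1, Ne.symm hw.1, hmin v hv.2.2,
    hmax v (mem_erase.2 ⟨hv.2.1, hv.2.2⟩)⟩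

section PseudolineCuts

variable (M : Finset (ℝ × ℝ))

open Classical in
noncomputable def belowCut (f : ℝ → ℝ) : Finset (M × Bool) :=
  {e | if e.2 then e.1.1.2 < f e.1.1.1 else e.1.1.2 ≤ f e.1.1.1}

open Classical in
noncomputable def cutFamily (F : Set (ℝ → ℝ)) : Finset (Finset (M × Bool)) :=
  {S | ∃ f ∈ F, belowCut M f = S}

def splitCut (S : Finset (M × Bool)) : Set (ℝ × ℝ) × Set (ℝ × ℝ) :=
  ({p | ∃ h : p ∈ M, (⟨p, h⟩, true) ∈ S}, {p | ∃ h : p ∈ M, (⟨p, h⟩, false) ∉ S})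

variable {M}

theorem mem_cutFamily {F : Set (ℝ → ℝ)} {S : Finset (M × Bool)} :
    S ∈ cutFamily M F ↔ ∃ f ∈ F, belowCut M f = S := by
  simp [cutFamily]

theorem splitCut_belowCut (f : ℝ → ℝ) :
    splitCut M (belowCut M f) =
      ({p | p ∈ M ∧ p.2 < f p.1}, {p | p ∈ M ∧ f p.1 < p.2}) := by
  ext p <;> simp [splitCut, belowCut]

theorem lt_of_mem_belowCut_of_notMem {f g : ℝ → ℝ} {e : M × Bool} (hf : e ∈ belowCut M f)
    (hg : e ∉ belowCut M g) : g e.1.1.1 < f e.1.1.1 := by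
  obtain ⟨⟨p, hp⟩, _ | _⟩ := e <;> simp [belowCut] at hf hg <;> linarith

theorem card_le_two_of_shatters_cutFamily {F : Set (ℝ → ℝ)} (hcont : ∀ f ∈ F, Continuous f)
    (hcross : ∀ f ∈ F, ∀ g ∈ F, f ≠ g → {x : ℝ | f x = g x}.Subsingleton)
    {s : Finset (M × Bool)} (hs : (cutFamily M F).Shatters s) : #s ≤ 2 := by
  by_contra! h3
  obtain ⟨u, hu, v, hv, w, hw, huv, hvw, -, huv_le, hvw_le⟩ :=
    s.exists_three_mem_le_le (fun e => e.1.1.1) h3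
  obtain ⟨_, hSf, hsf⟩ := hs (t := {u, w}) (by simp [insert_subset_iff, hu, hw])
  obtain ⟨_, hSg, hsg⟩ := hs (t := {v}) (by simpa using hv)
  obtain ⟨f, hf, rfl⟩ := mem_cutFamily.1 hSf
  obtain ⟨g, hg, rfl⟩ := mem_cutFamily.1 hSg
  have mem_f : ∀ e ∈ s, e ∈ belowCut M f ↔ e = u ∨ e = w := fun e he => by
    simpa [he] using congrArg (e ∈ ·) hsf
  have mem_g : ∀ e ∈ s, e ∈ belowCut M g ↔ e = v := fun e he => by
    simpa [he] using congrArg (e ∈ ·) hsg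
  have hfg : f ≠ g := by
    rintro rfl
    rcases (mem_f v hv).1 ((mem_g v hv).2 rfl) with h | h
    exacts [huv h.symm, hvw h]
  refine Set.not_nontrivial_iff.2 (hcross f hf g hg hfg) <|
    (hcont f hf).nontrivial_eq_of_lt_gt_lt (hcont g hg) huv_le hvw_le ?_ ?_ ?_
  · exact lt_of_mem_belowCut_of_notMem ((mem_f u hu).2 (.inl rfl))
      (fun h => huv ((mem_g u hu).1 h))
  · exact lt_of_mem_belowCut_of_notMem ((mem_g v hv).2 rfl)
      (fun h => ((mem_f v hv).1 h).elim (fun h => huv h.symm) hvw)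
  · exact lt_of_mem_belowCut_of_notMem ((mem_f w hw).2 (.inr rfl))
      (fun h => hvw ((mem_g w hw).1 h).symm)

theorem card_cutFamily_le {F : Set (ℝ → ℝ)} (hcont : ∀ f ∈ F, Continuous f)
    (hcross : ∀ f ∈ F, ∀ g ∈ F, f ≠ g → {x : ℝ | f x = g x}.Subsingleton) :
    #(cutFamily M F) ≤ 3 * (#M ^ 2 + 1) := by
  have hvc : (cutFamily M F).vcDim ≤ 2 :=
    Finset.sup_le fun s hs => card_le_two_of_shatters_cutFamily hcont hcross (mem_shatterer.1 hs)
  have hchoose : (2 * #M).choose 2 ≤ 2 * #M ^ 2 := by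
    rw [Nat.choose_two_right]
    refine Nat.div_le_of_le_mul ?_
    nlinarith [Nat.sub_le (2 * #M) 1]
  calc #(cutFamily M F)
      ≤ #(cutFamily M F).shatterer := card_le_card_shatterer _
    _ ≤ ∑ k ∈ Iic (cutFamily M F).vcDim, (Fintype.card (M × Bool)).choose k :=
      card_shatterer_le_sum_vcDim
    _ ≤ ∑ k ∈ Iic 2, (2 * #M).choose k := by
      rw [Fintype.card_prod, Fintype.card_coe, Fintype.card_bool, mul_comm]
      exact sum_le_sum_of_subset (Iic_subset_Iic.2 hvc)
    _ = 1 + 2 * #M + (2 * #M).choose 2 := by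
      simp [show (Iic 2 : Finset ℕ) = {0, 1, 2} from rfl, add_assoc]
    _ ≤ 3 * (#M ^ 2 + 1) := by nlinarith [two_mul_le_add_sq (#M) 1]

end PseudolineCuts

/-- For a family `F` of pseudo-lines (any two distinct members equal at
most once) and a set `M` of `t` points, the number of equivalence classes of `F` under
"same strictly-below subset of `M` and same strictly-above subset of `M`" is `O(t²)`. -/
theorem stmt_8 :
    ∃ C : ℕ, 0 < C ∧ ∀ (F : Set (ℝ → ℝ)),
      (∀ f ∈ F, Continuous f) →
      (∀ f ∈ F, ∀ g ∈ F, f ≠ g → {x : ℝ | f x = g x}.Subsingleton) →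
      ∀ (M : Finset (ℝ × ℝ)),
        {AB : Set (ℝ × ℝ) × Set (ℝ × ℝ) | ∃ f ∈ F,
            AB.1 = {p : ℝ × ℝ | p ∈ M ∧ p.2 < f p.1} ∧
            AB.2 = {p : ℝ × ℝ | p ∈ M ∧ f p.1 < p.2}}.ncard
          ≤ C * (M.card ^ 2 + 1) := by
  refine ⟨3, by norm_num, fun F hcont hcross M => ?_⟩
  have hclasses : {AB : Set (ℝ × ℝ) × Set (ℝ × ℝ) | ∃ f ∈ F,
      AB.1 = {p : ℝ × ℝ | p ∈ M ∧ p.2 < f p.1} ∧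
      AB.2 = {p : ℝ × ℝ | p ∈ M ∧ f p.1 < p.2}} ⊆ splitCut M '' ↑(cutFamily M F) := by
    rintro AB ⟨f, hf, hA, hB⟩
    exact ⟨belowCut M f, mem_cutFamily.2 ⟨f, hf, rfl⟩,
      by rw [splitCut_belowCut, Prod.ext_iff]; exact ⟨hA.symm, hB.symm⟩⟩
  calc _ ≤ (splitCut M '' ↑(cutFamily M F)).ncard :=
        Set.ncard_le_ncard hclasses (Set.toFinite _)
    _ ≤ #(cutFamily M F) :=
        (Set.ncard_image_le (Finset.finite_toSet _)).trans (Set.ncard_coe_finset _).le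
    _ ≤ 3 * (#M ^ 2 + 1) := card_cutFamily_le hcont hcross
end

section
/- Let F be a family of continuous functions ℝ → ℝ whose graphs pairwise intersect at most once. Then the set system (on points of the plane) {S_f : f ∈ F}, where S_f = {(x,y) : y < f(x)}, has VC dimension at most 2; that is, for any 3 points of the plane, not all 8 subsets can be realized as {p : p below f} for f ∈ F. -/
/-- If two points of `P` share an x-coordinate, the shattering hypothesis fails. -/
lemma samex_aux (F : Set (ℝ → ℝ)) (P : Finset (ℝ × ℝ)) (a b : ℝ × ℝ)
    (ha : a ∈ P) (hb : b ∈ P) (hx : a.1 = b.1) (hy : a.2 < b.2)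
    (hsh : ∀ A ⊆ P, ∃ f ∈ F, ∀ p ∈ P, (p ∈ A ↔ p.2 < f p.1)) : False := by
  obtain ⟨f, _, hfp⟩ := hsh {b} (Finset.singleton_subset_iff.mpr hb)
  have hab : a ≠ b := fun h => absurd (congrArg Prod.snd h) (ne_of_lt hy)
  have hfb : b.2 < f b.1 := (hfp b hb).1 (Finset.mem_singleton_self b)
  have hfa : ¬ a.2 < f a.1 := fun h => hab (Finset.mem_singleton.mp ((hfp a ha).2 h))
  rw [hx] at hfa
  exact hfa (lt_trans hy hfb)

/-- If `P` contains three points with strictly increasing x-coordinates, the shattering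
hypothesis fails, by an intermediate-value argument. -/
lemma middle_aux (F : Set (ℝ → ℝ))
    (hcont : ∀ f ∈ F, Continuous f)
    (honce : ∀ f ∈ F, ∀ g ∈ F, f ≠ g → {x : ℝ | f x = g x}.Subsingleton)
    (P : Finset (ℝ × ℝ)) (u m v : ℝ × ℝ)
    (hu : u ∈ P) (hm : m ∈ P) (hv : v ∈ P)
    (h1 : u.1 < m.1) (h2 : m.1 < v.1)
    (hsh : ∀ A ⊆ P, ∃ f ∈ F, ∀ p ∈ P, (p ∈ A ↔ p.2 < f p.1)) : False := by
  have hum : u ≠ m := fun h => absurd (congrArg Prod.fst h) (ne_of_lt h1)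
  have hmv : m ≠ v := fun h => absurd (congrArg Prod.fst h) (ne_of_lt h2)
  obtain ⟨f, hf, hfp⟩ := hsh {m} (Finset.singleton_subset_iff.mpr hm)
  obtain ⟨g, hg, hgp⟩ := hsh {u, v}
    (Finset.insert_subset hu (Finset.singleton_subset_iff.mpr hv))
  have hfm : m.2 < f m.1 := (hfp m hm).1 (Finset.mem_singleton_self m)
  have hfu : f u.1 ≤ u.2 := by
    by_contra h
    exact hum (Finset.mem_singleton.mp ((hfp u hu).2 (not_le.mp h)))
  have hfv : f v.1 ≤ v.2 := by
    by_contra h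
    exact hmv.symm (Finset.mem_singleton.mp ((hfp v hv).2 (not_le.mp h)))
  have hgu : u.2 < g u.1 := (hgp u hu).1 (Finset.mem_insert_self u {v})
  have hgv : v.2 < g v.1 := (hgp v hv).1 (by simp)
  have hgm : g m.1 ≤ m.2 := by
    by_contra h
    rcases Finset.mem_insert.mp ((hgp m hm).2 (not_le.mp h)) with h' | h'
    · exact hum h'.symm
    · exact hmv (Finset.mem_singleton.mp h')
  have hne : f ≠ g := by
    intro h
    rw [h] at hfm
    exact absurd hfm (not_lt.mpr hgm)
  set d : ℝ → ℝ := fun x => f x - g x with hd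
  have hdc : Continuous d := (hcont f hf).sub (hcont g hg)
  have hd1 : d u.1 < 0 := by simp only [hd]; linarith
  have hd2 : 0 < d m.1 := by simp only [hd]; linarith
  have hd3 : d v.1 < 0 := by simp only [hd]; linarith
  obtain ⟨s, hs, hs0⟩ :=
    intermediate_value_Ioo (le_of_lt h1) hdc.continuousOn ⟨hd1, hd2⟩
  obtain ⟨t, ht, ht0⟩ :=
    intermediate_value_Ioo' (le_of_lt h2) hdc.continuousOn ⟨hd3, hd2⟩
  have hfs : f s = g s := sub_eq_zero.mp hs0
  have hft : f t = g t := sub_eq_zero.mp ht0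
  have : s = t := honce f hf g hg hne hfs hft
  have := hs.2
  have := ht.1
  linarith [this]

/-- The regions below the members of a pseudo-line family (continuous
functions pairwise equal at most once) have VC dimension at most 2: no 3 points can be
shattered, i.e., for any 3 points not all 8 subsets arise as `{p : p below f}`. -/
theorem stmt_9 (F : Set (ℝ → ℝ))
    (hcont : ∀ f ∈ F, Continuous f)
    (honce : ∀ f ∈ F, ∀ g ∈ F, f ≠ g → {x : ℝ | f x = g x}.Subsingleton)
    (P : Finset (ℝ × ℝ)) (hP : P.card = 3) :
    ¬ ∀ A ⊆ P, ∃ f ∈ F, ∀ p ∈ P, (p ∈ A ↔ p.2 < f p.1) := by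
  intro hsh
  obtain ⟨a, b, c, hab, hac, hbc, hPabc⟩ := Finset.card_eq_three.mp hP
  have ha : a ∈ P := by rw [hPabc]; simp
  have hb : b ∈ P := by rw [hPabc]; simp
  have hc : c ∈ P := by rw [hPabc]; simp
  -- x-coordinates are pairwise distinct
  have hxne : ∀ p q : ℝ × ℝ, p ∈ P → q ∈ P → p ≠ q → p.1 ≠ q.1 := by
    intro p q hp hq hpq hx
    have hyne : p.2 ≠ q.2 := fun hy => hpq (Prod.ext hx hy)
    rcases hyne.lt_or_gt with h | h
    · exact samex_aux F P p q hp hq hx h hsh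
    · exact samex_aux F P q p hq hp hx.symm h hsh
  have hxab := hxne a b ha hb hab
  have hxac := hxne a c ha hc hac
  have hxbc := hxne b c hb hc hbc
  rcases hxab.lt_or_gt with h1 | h1 <;> rcases hxac.lt_or_gt with h2 | h2 <;>
    rcases hxbc.lt_or_gt with h3 | h3
  · exact middle_aux F hcont honce P a b c ha hb hc h1 h3 hsh
  · exact middle_aux F hcont honce P a c b ha hc hb h2 h3 hsh
  · linarith
  · exact middle_aux F hcont honce P c a b hc ha hb h2 h1 hsh
  · exact middle_aux F hcont honce P b a c hb ha hc h1 h2 hsh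
  · linarith
  · exact middle_aux F hcont honce P b c a hb hc ha h3 h2 hsh
  · exact middle_aux F hcont honce P c b a hc hb ha h3 h1 hsh
end
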